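/- arXiv:1602.07203 — 2 statements merged into one kernel-verified Lean document; each statement's English description precedes it below -/
import Mathlib

section
/- (Gérardin) Let x = ∑_{k=0}^{d-1} x_k t^k ∈ ℂ[C_d] with x_0 = 1 satisfy x * x = (x*x)(0) · x (the E-system). Then there exists a nonempty subset D of ℤ/dℤ such that x = (1/|D|) ∑_{m ∈ D} i_m, where i_m = ∑_{s=0}^{d-1} e^{2πi ms/d} t^s. Conversely, for every nonempty D ⊆ ℤ/dℤ, the element x = (1/|D|)∑_{m∈D} i_m satisfies the E-system and has x_0 = 1. -/
noncomputable def cconv (d : ℕ) [NeZero d] (a b : ZMod d → ℂ) : ZMod d → ℂ :=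
  fun r => ∑ s : ZMod d, a s * b (r - s)

noncomputable def cchi (d : ℕ) (a s : ZMod d) : ℂ :=
  Complex.exp (2 * Real.pi * Complex.I * (a.val * s.val) / d)

noncomputable def dft (d : ℕ) [NeZero d] (y : ZMod d → ℂ) : ZMod d → ℂ :=
  fun m => cconv d y (cchi d m) 0

noncomputable def zet (d : ℕ) : ℂ := Complex.exp (2 * Real.pi * Complex.I / d)

section aux
variable (d : ℕ) [NeZero d]

lemma zet_pow_d : zet d ^ d = 1 := by
  have hd : (d:ℂ) ≠ 0 := Nat.cast_ne_zero.mpr (NeZero.ne d)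
  rw [zet, ← Complex.exp_nat_mul,
    show (d:ℂ) * (2 * Real.pi * Complex.I / d) = 2 * Real.pi * Complex.I by field_simp]
  exact Complex.exp_two_pi_mul_I

lemma zet_pow_mod (n : ℕ) : zet d ^ n = zet d ^ (n % d) := by
  conv_lhs => rw [← Nat.div_add_mod n d]
  rw [pow_add, pow_mul, zet_pow_d, one_pow, one_mul]

noncomputable def Ee (a : ZMod d) : ℂ := zet d ^ a.val

omit [NeZero d] in
lemma Ee_zero : Ee d 0 = 1 := by simp [Ee]

lemma Ee_add (a b : ZMod d) : Ee d (a + b) = Ee d a * Ee d b := by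
  rw [Ee, Ee, Ee, ← pow_add, ZMod.val_add, ← zet_pow_mod]

lemma cchi_Ee (m s : ZMod d) : cchi d m s = Ee d (m * s) := by
  rw [cchi, Ee, ZMod.val_mul, ← zet_pow_mod, zet, ← Complex.exp_nat_mul]
  congr 1
  push_cast
  ring

lemma sum_zmod_pow (w : ℂ) : ∑ s : ZMod d, w ^ s.val = ∑ j ∈ Finset.range d, w ^ j := by
  refine Finset.sum_bij' (fun s _ => s.val) (fun j _ => (j : ZMod d)) ?_ ?_ ?_ ?_ ?_
  · intro s _; exact Finset.mem_range.mpr (ZMod.val_lt s)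
  · intro j _; exact Finset.mem_univ _
  · intro s _; exact ZMod.natCast_rightInverse s
  · intro j hj; exact ZMod.val_cast_of_lt (Finset.mem_range.mp hj)
  · intro s _; rfl

lemma zet_pow_ne_one (a : ZMod d) (ha : a ≠ 0) : zet d ^ a.val ≠ 1 := by
  intro h
  rw [zet, ← Complex.exp_nat_mul, Complex.exp_eq_one_iff] at h
  obtain ⟨n, hn⟩ := h
  have hd : (d:ℂ) ≠ 0 := Nat.cast_ne_zero.mpr (NeZero.ne d)
  have h2 : (2 : ℂ) * Real.pi * Complex.I ≠ 0 :=
    mul_ne_zero (mul_ne_zero two_ne_zero (Complex.ofReal_ne_zero.mpr Real.pi_ne_zero))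
      Complex.I_ne_zero
  set A := (a.val : ℂ) with hA
  have hmul : A * (2 * Real.pi * Complex.I) = ((n : ℂ) * d) * (2 * Real.pi * Complex.I) := by
    calc A * (2 * Real.pi * Complex.I) = (A * (2 * Real.pi * Complex.I / d)) * d := by
          field_simp
      _ = ((n : ℂ) * (2 * Real.pi * Complex.I)) * d := by rw [hn]
      _ = ((n : ℂ) * d) * (2 * Real.pi * Complex.I) := by ring
  have hAe : A = (n : ℂ) * d := mul_right_cancel₀ h2 hmul
  have hz : (a.val : ℤ) = n * d := by rw [hA] at hAe; exact_mod_cast hAe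
  have hdvd : (d : ℤ) ∣ (a.val : ℤ) := ⟨n, by linarith [hz]⟩
  have hdvd' : d ∣ a.val := Int.ofNat_dvd.mp hdvd
  have := Nat.eq_zero_of_dvd_of_lt hdvd' (ZMod.val_lt a)
  · exact ha (by rwa [ZMod.val_eq_zero] at this)

lemma orth (a : ZMod d) : ∑ s : ZMod d, Ee d (a * s) = if a = 0 then (d:ℂ) else 0 := by
  by_cases ha : a = 0
  · simp [ha, Ee_zero, Finset.card_univ, ZMod.card]
  · rw [if_neg ha]
    have h1 : ∀ s : ZMod d, Ee d (a * s) = (zet d ^ a.val) ^ s.val := by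
      intro s; rw [Ee, ZMod.val_mul, ← zet_pow_mod, pow_mul]
    rw [Finset.sum_congr rfl fun s _ => h1 s, sum_zmod_pow, geom_sum_eq (zet_pow_ne_one d a ha)]
    rw [← pow_mul, mul_comm, pow_mul, zet_pow_d, one_pow]
    simp

lemma conv_chi (a b r : ZMod d) :
    ∑ s : ZMod d, Ee d (a * s) * Ee d (b * (r - s))
      = (if a = b then (d:ℂ) else 0) * Ee d (b * r) := by
  have h1 : ∀ s : ZMod d, Ee d (a*s) * Ee d (b*(r-s)) = Ee d ((a-b)*s) * Ee d (b*r) := by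
    intro s
    rw [← Ee_add, ← Ee_add]
    congr 1
    ring
  rw [Finset.sum_congr rfl fun s _ => h1 s, ← Finset.sum_mul, orth]
  congr 1
  simp [sub_eq_zero]

lemma dft_conv_self (x : ZMod d → ℂ) (m : ZMod d) :
    ∑ r : ZMod d, cconv d x x r * Ee d (-(m*r))
      = (∑ s : ZMod d, x s * Ee d (-(m*s)))^2 := by
  simp only [cconv]
  calc ∑ r : ZMod d, (∑ s : ZMod d, x s * x (r - s)) * Ee d (-(m*r))
      = ∑ r : ZMod d, ∑ s : ZMod d, x s * x (r-s) * Ee d (-(m*r)) := by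
        refine Finset.sum_congr rfl fun r _ => ?_
        rw [Finset.sum_mul]
    _ = ∑ s : ZMod d, ∑ r : ZMod d, x s * x (r-s) * Ee d (-(m*r)) := Finset.sum_comm
    _ = ∑ s : ZMod d, ∑ u : ZMod d, x s * x u * Ee d (-(m*(u+s))) := by
        refine Finset.sum_congr rfl fun s _ => ?_
        rw [← Equiv.sum_comp (Equiv.addRight s) (fun r => x s * x (r - s) * Ee d (-(m*r)))]
        simp
    _ = ∑ s : ZMod d, ∑ u : ZMod d, (x s * Ee d (-(m*s))) * (x u * Ee d (-(m*u))) := by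
        refine Finset.sum_congr rfl fun s _ => Finset.sum_congr rfl fun u _ => ?_
        rw [show -(m*(u+s)) = -(m*s) + -(m*u) by ring, Ee_add]
        ring
    _ = (∑ s : ZMod d, x s * Ee d (-(m*s))) ^ 2 := by
        rw [pow_two, Finset.sum_mul_sum]

lemma inversion (x : ZMod d → ℂ) (s : ZMod d) :
    ∑ m : ZMod d, (∑ t : ZMod d, x t * Ee d (-(m*t))) * Ee d (m*s) = d * x s := by
  calc ∑ m : ZMod d, (∑ t : ZMod d, x t * Ee d (-(m*t))) * Ee d (m*s)
      = ∑ m : ZMod d, ∑ t : ZMod d, x t * Ee d ((s-t)*m) := by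
        refine Finset.sum_congr rfl fun m _ => ?_
        rw [Finset.sum_mul]
        refine Finset.sum_congr rfl fun t _ => ?_
        rw [mul_assoc, ← Ee_add]
        congr 2
        ring
    _ = ∑ t : ZMod d, ∑ m : ZMod d, x t * Ee d ((s-t)*m) := Finset.sum_comm
    _ = ∑ t : ZMod d, x t * (if s - t = 0 then (d:ℂ) else 0) := by
        refine Finset.sum_congr rfl fun t _ => ?_
        rw [← Finset.mul_sum, orth]
    _ = ∑ t : ZMod d, (if t = s then (d:ℂ) * x t else 0) := by
        refine Finset.sum_congr rfl fun t _ => ?_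
        by_cases h : t = s
        · subst h; simp [mul_comm]
        · simp [h, sub_eq_zero, Ne.symm h]
    _ = (d:ℂ) * x s := by
        rw [Finset.sum_ite_eq' Finset.univ s (fun t => (d:ℂ) * x t)]
        simp

end aux

theorem stmt_10 (d : ℕ) [NeZero d] :
    (∀ x : ZMod d → ℂ, x 0 = 1 →
      (cconv d x x = fun r => cconv d x x 0 * x r) →
      ∃ D : Finset (ZMod d), D.Nonempty ∧
        ∀ s, x s = (D.card : ℂ)⁻¹ * ∑ m ∈ D, cchi d m s) ∧
    (∀ D : Finset (ZMod d), D.Nonempty →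
      ((D.card : ℂ)⁻¹ * ∑ m ∈ D, cchi d m (0 : ZMod d)) = 1 ∧
      (cconv d (fun s => (D.card : ℂ)⁻¹ * ∑ m ∈ D, cchi d m s)
              (fun s => (D.card : ℂ)⁻¹ * ∑ m ∈ D, cchi d m s)
        = fun r => cconv d (fun s => (D.card : ℂ)⁻¹ * ∑ m ∈ D, cchi d m s)
                          (fun s => (D.card : ℂ)⁻¹ * ∑ m ∈ D, cchi d m s) 0
                   * ((D.card : ℂ)⁻¹ * ∑ m ∈ D, cchi d m r))) := by
  have hd : (d:ℂ) ≠ 0 := Nat.cast_ne_zero.mpr (NeZero.ne d)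
  constructor
  · -- forward
    intro x hx0 hE
    set X : ZMod d → ℂ := fun m => ∑ s : ZMod d, x s * Ee d (-(m*s)) with hX
    set c : ℂ := cconv d x x 0 with hc
    have hsq : ∀ m, X m ^ 2 = c * X m := by
      intro m
      have h1 := dft_conv_self d x m
      rw [hE] at h1
      simp only at h1
      rw [← h1, hX]
      simp only
      rw [Finset.mul_sum]
      exact Finset.sum_congr rfl fun r _ => by ring
    set D : Finset (ZMod d) := Finset.univ.filter (fun m => X m ≠ 0) with hD
    have hXD : ∀ m, m ∉ D → X m = 0 := by
      intro m hm
      by_contra h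
      exact hm (Finset.mem_filter.mpr ⟨Finset.mem_univ _, h⟩)
    have hXc : ∀ m ∈ D, X m = c := by
      intro m hm
      have h0 : X m ≠ 0 := (Finset.mem_filter.mp hm).2
      have h1 := hsq m
      rw [pow_two] at h1
      exact mul_right_cancel₀ h0 h1
    have hinv : ∀ s, (d:ℂ) * x s = ∑ m ∈ D, c * Ee d (m*s) := by
      intro s
      have h2 : ∑ m ∈ D, X m * Ee d (m*s) = ∑ m : ZMod d, X m * Ee d (m*s) :=
        Finset.sum_subset (Finset.subset_univ D) (fun m _ hm => by rw [hXD m hm, zero_mul])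
      rw [← inversion d x s, ← h2]
      exact Finset.sum_congr rfl fun m hm => by rw [hXc m hm]
    have h00 : (d:ℂ) = c * D.card := by
      have h3 := hinv 0
      rw [hx0, mul_one] at h3
      simpa [mul_zero, Ee_zero, Finset.sum_const, nsmul_eq_mul, mul_comm] using h3
    have hDne : D.Nonempty := by
      rcases Finset.eq_empty_or_nonempty D with h | h
      · rw [h] at h00; simp at h00; exact absurd h00 (NeZero.ne d)
      · exact h
    have hcard : (D.card : ℂ) ≠ 0 := Nat.cast_ne_zero.mpr (Finset.card_pos.mpr hDne).ne'
    have hcne : c ≠ 0 := by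
      intro h
      rw [h, zero_mul] at h00
      exact hd h00
    refine ⟨D, hDne, fun s => ?_⟩
    have h5 := hinv s
    rw [← Finset.mul_sum] at h5
    have h3 : c * ((D.card:ℂ) * x s) = c * (∑ m ∈ D, Ee d (m*s)) := by
      rw [← mul_assoc, ← h00]
      exact h5
    have h4 := mul_left_cancel₀ hcne h3
    simp only [cchi_Ee]
    rw [← h4, inv_mul_cancel_left₀ hcard]
  · -- converse
    intro D hDne
    have hcard : (D.card : ℂ) ≠ 0 := Nat.cast_ne_zero.mpr (Finset.card_pos.mpr hDne).ne'
    set x : ZMod d → ℂ := fun s => (D.card : ℂ)⁻¹ * ∑ m ∈ D, cchi d m s with hx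
    have hxr : ∀ r, x r = (D.card : ℂ)⁻¹ * ∑ m ∈ D, cchi d m r := fun r => rfl
    have hx0 : x 0 = 1 := by
      rw [hxr]
      simp only [cchi_Ee, mul_zero, Ee_zero, Finset.sum_const, nsmul_eq_mul, mul_one]
      exact inv_mul_cancel₀ hcard
    have key : ∀ r, cconv d x x r = ((d:ℂ) * (D.card:ℂ)⁻¹) * x r := by
      intro r
      simp only [cconv]
      calc ∑ s : ZMod d, x s * x (r - s)
          = (D.card:ℂ)⁻¹ * (D.card:ℂ)⁻¹ *
              ∑ s : ZMod d, (∑ a ∈ D, Ee d (a*s)) * (∑ b ∈ D, Ee d (b*(r-s))) := by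
            rw [Finset.mul_sum]
            refine Finset.sum_congr rfl fun s _ => ?_
            rw [hxr s, hxr (r-s)]
            simp only [cchi_Ee]
            ring
        _ = (D.card:ℂ)⁻¹ * (D.card:ℂ)⁻¹ *
              ∑ a ∈ D, ∑ b ∈ D, ∑ s : ZMod d, Ee d (a*s) * Ee d (b*(r-s)) := by
            congr 1
            rw [Finset.sum_congr rfl fun s _ => Finset.sum_mul_sum D D _ _]
            rw [Finset.sum_comm]
            exact Finset.sum_congr rfl fun a _ => Finset.sum_comm
        _ = (D.card:ℂ)⁻¹ * (D.card:ℂ)⁻¹ * ∑ a ∈ D, (d:ℂ) * Ee d (a*r) := by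
            congr 1
            refine Finset.sum_congr rfl fun a ha => ?_
            calc ∑ b ∈ D, ∑ s : ZMod d, Ee d (a*s) * Ee d (b*(r-s))
                = ∑ b ∈ D, (if a = b then ((d:ℂ) * Ee d (b*r)) else 0) := by
                  refine Finset.sum_congr rfl fun b _ => ?_
                  rw [conv_chi, ite_mul, zero_mul]
              _ = (d:ℂ) * Ee d (a*r) := by
                  rw [Finset.sum_ite_eq D a (fun b => (d:ℂ) * Ee d (b*r)), if_pos ha]
        _ = ((d:ℂ) * (D.card:ℂ)⁻¹) * x r := by
            rw [hxr r]
            simp only [cchi_Ee]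
            rw [← Finset.mul_sum]
            ring
    constructor
    · exact hx0
    · funext r
      show cconv d x x r = cconv d x x 0 * ((D.card : ℂ)⁻¹ * ∑ m ∈ D, cchi d m r)
      rw [key r, key 0, hx0, mul_one, ← hxr r]
end

section
/- For a solution of the E-system parametrized by a nonempty subset D ⊆ ℤ/dℤ, namely x_s = (1/|D|) ∑_{m ∈ D} e^{2πi ms/d}, the value E_D := (1/d)∑_{s=0}^{d-1} x_s x_{d-s} (with x_0 = 1, indices mod d) equals 1/|D|. -/
lemma cchi_eq_stdAddChar (d : ℕ) [NeZero d] (a s : ZMod d) :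
    cchi d a s = ZMod.stdAddChar (a * s) := by
  have h := ZMod.stdAddChar_coe (N := d) ((a.val * s.val : ℕ) : ℤ)
  have h2 : (((a.val * s.val : ℕ) : ℤ) : ZMod d) = a * s := by
    push_cast [ZMod.natCast_val, ZMod.cast_id]
    ring
  rw [h2] at h
  rw [h, cchi]
  push_cast
  ring_nf

lemma key_sum (d : ℕ) [NeZero d] (m m' : ZMod d) :
    ∑ s : ZMod d, ZMod.stdAddChar (m * s) * ZMod.stdAddChar (m' * (-s))
      = if m = m' then (d : ℂ) else 0 := by
  have hrw : ∀ s : ZMod d, ZMod.stdAddChar (m * s) * ZMod.stdAddChar (m' * (-s))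
      = (AddChar.mulShift ZMod.stdAddChar (m - m')) s := by
    intro s
    rw [AddChar.mulShift_apply, ← AddChar.map_add_eq_mul]
    ring_nf
  simp_rw [hrw]
  split_ifs with h
  · subst h
    rw [sub_self, AddChar.mulShift_zero]
    simp [ZMod.card]
  · rw [AddChar.sum_eq_zero_iff_ne_zero.mpr]
    rw [← AddChar.one_eq_zero]
    exact ZMod.isPrimitive_stdAddChar d (sub_ne_zero.mpr h)

theorem stmt_12 (d : ℕ) [NeZero d] (D : Finset (ZMod d)) (hD : D.Nonempty) :
    (d : ℂ)⁻¹ * ∑ s : ZMod d, ((D.card : ℂ)⁻¹ * ∑ m ∈ D, cchi d m s) *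
      ((D.card : ℂ)⁻¹ * ∑ m ∈ D, cchi d m (-s)) = (D.card : ℂ)⁻¹ := by
  set c : ℂ := (D.card : ℂ) with hc
  have hc0 : c ≠ 0 := Nat.cast_ne_zero.mpr (Finset.card_ne_zero_of_mem hD.choose_spec)
  have hd0 : (d : ℂ) ≠ 0 := Nat.cast_ne_zero.mpr (NeZero.ne d)
  have hstep : ∀ s : ZMod d,
      ((c)⁻¹ * ∑ m ∈ D, cchi d m s) * ((c)⁻¹ * ∑ m ∈ D, cchi d m (-s))
        = c⁻¹ * c⁻¹ * ∑ m ∈ D, ∑ m' ∈ D,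
            ZMod.stdAddChar (m * s) * ZMod.stdAddChar (m' * (-s)) := by
    intro s
    simp_rw [cchi_eq_stdAddChar]
    rw [show ((c)⁻¹ * ∑ m ∈ D, ZMod.stdAddChar (m * s)) *
        ((c)⁻¹ * ∑ m ∈ D, ZMod.stdAddChar (m * (-s)))
      = c⁻¹ * c⁻¹ * ((∑ m ∈ D, ZMod.stdAddChar (m * s)) *
        (∑ m ∈ D, ZMod.stdAddChar (m * (-s)))) from by ring, Finset.sum_mul_sum]
  simp_rw [hstep]
  rw [← Finset.mul_sum]
  rw [Finset.sum_comm]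
  have : ∀ m ∈ D, ∑ s : ZMod d, ∑ m' ∈ D,
      ZMod.stdAddChar (m * s) * ZMod.stdAddChar (m' * (-s)) = (d : ℂ) := by
    intro m hm
    rw [Finset.sum_comm]
    have : ∀ m' ∈ D, ∑ s : ZMod d,
        ZMod.stdAddChar (m * s) * ZMod.stdAddChar (m' * (-s))
          = if m = m' then (d : ℂ) else 0 := fun m' _ => key_sum d m m'
    rw [Finset.sum_congr rfl this, Finset.sum_ite_eq D m (fun _ => (d : ℂ)),
      if_pos hm]
  rw [Finset.sum_congr rfl this, Finset.sum_const, nsmul_eq_mul, ← hc]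
  field_simp
end
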